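/- arXiv:1205.2061 — 8 statements merged into one kernel-verified Lean document; each statement's English description precedes it below -/
import Mathlib

section
/- Let B = (b_{ij}) be an n×n real matrix with n ≥ 2. Define σ₁(B) = ∑_i b_{ii}, σ₁(B|k) = σ₁(B) − b_{kk}, and σ₂(B) = ∑_{i<j} (b_{ii} b_{jj} − b_{ij} b_{ji}). Then for each 1 ≤ k ≤ n: σ₁(B)·σ₁(B|k) = σ₂(B) + (n/(2(n−1)))·(σ₁(B|k))² + ∑_{i<j} b_{ij} b_{ji} + (1/(2(n−1)))·∑_{i<j, i≠k, j≠k} (b_{ii} − b_{jj})², where the last sum is empty (zero) when n = 2. -/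
/-!
Only the diagonal of `B` matters: `σ₂(B) + ∑_{i<j} b_ij b_ji = ∑_{i<j} b_ii b_jj
= (σ₁(B)² - ∑ b_ii²) / 2`, and Lagrange's identity over the `n - 1` indices `i ≠ k` gives
`∑_{i<j, i,j≠k} (b_ii - b_jj)² = (n - 1) ∑_{i≠k} b_ii² - σ₁(B|k)²`. Substituting both, the right
side collapses to `(σ₁(B)² + σ₁(B|k)² - b_kk²) / 2`, which is `σ₁(B) σ₁(B|k)` because
`σ₁(B) = σ₁(B|k) + b_kk`.
-/

open Finset

namespace Finset

variable {ι : Type*} [LinearOrder ι] (s : Finset ι)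

theorem sum_sum_eq_sum_sum_lt_add_sum_diag {M : Type*} [AddCommMonoid M] (f : ι → ι → M) :
    ∑ i ∈ s, ∑ j ∈ s, f i j = ∑ i ∈ s, ∑ j ∈ s with i < j, (f i j + f j i) + ∑ i ∈ s, f i i := by
  have hsplit : ∀ i ∈ s, ∑ j ∈ s, f i j
      = ∑ j ∈ s with i < j, f i j + ∑ j ∈ s with j < i, f i j + f i i := by
    intro i hi
    rw [← sum_filter_add_sum_filter_not s (fun j => i < j), add_assoc]
    congr 1
    rw [← sum_filter_add_sum_filter_not (s.filter fun j => ¬ i < j) (fun j => j < i),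
      filter_filter, filter_filter]
    congr 1
    · exact sum_congr (filter_congr fun j _ => by grind) fun _ _ => rfl
    · rw [show (s.filter fun j => ¬ i < j ∧ ¬ j < i) = {i} by ext j; grind]
      exact sum_singleton _ _
  have hswap : ∑ i ∈ s, ∑ j ∈ s with j < i, f i j = ∑ i ∈ s, ∑ j ∈ s with i < j, f j i :=
    sum_comm' (by intros; simp only [mem_filter]; tauto)
  rw [sum_congr rfl hsplit, sum_add_distrib, sum_add_distrib, hswap]
  simp only [sum_add_distrib]

theorem sq_sum_eq_two_mul_sum_sum_lt_add_sum_sq {R : Type*} [CommSemiring R] (x : ι → R) :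
    (∑ i ∈ s, x i) ^ 2 = 2 * ∑ i ∈ s, ∑ j ∈ s with i < j, x i * x j + ∑ i ∈ s, x i ^ 2 := by
  rw [sq, sum_mul_sum, sum_sum_eq_sum_sum_lt_add_sum_diag, mul_sum]
  simp only [mul_sum, sq]
  congr 1
  exact sum_congr rfl fun i _ => sum_congr rfl fun j _ => by ring

theorem sum_sum_lt_sq_sub_eq {R : Type*} [CommRing R] (x : ι → R) :
    ∑ i ∈ s, ∑ j ∈ s with i < j, (x i - x j) ^ 2
      = #s * ∑ i ∈ s, x i ^ 2 - (∑ i ∈ s, x i) ^ 2 := by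
  -- `x i ^ 2 - x i * x j` is half of `(x i - x j) ^ 2` and vanishes on the diagonal.
  have h := sum_sum_eq_sum_sum_lt_add_sum_diag s (fun i j => x i ^ 2 - x i * x j)
  simp only [← sq, sub_self, sum_const_zero, add_zero] at h
  calc ∑ i ∈ s, ∑ j ∈ s with i < j, (x i - x j) ^ 2
      = ∑ i ∈ s, ∑ j ∈ s with i < j, ((x i ^ 2 - x i * x j) + (x j ^ 2 - x j * x i)) :=
        sum_congr rfl fun i _ => sum_congr rfl fun j _ => by ring
    _ = ∑ i ∈ s, ∑ j ∈ s, (x i ^ 2 - x i * x j) := h.symm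
    _ = #s * ∑ i ∈ s, x i ^ 2 - (∑ i ∈ s, x i) ^ 2 := by
        simp only [sum_sub_distrib, ← mul_sum, sum_const, nsmul_eq_mul, sq, sum_mul_sum]
        rw [mul_sum]
        congr 1
        exact sum_congr rfl fun _ _ => by ring

end Finset

theorem sigma_identity (n : ℕ) (hn : 2 ≤ n) (B : Matrix (Fin n) (Fin n) ℝ) (k : Fin n) :
    (∑ i, B i i) * ((∑ i, B i i) - B k k)
      = (∑ i, ∑ j ∈ univ.filter (fun j => i < j), (B i i * B j j - B i j * B j i))
        + ((n : ℝ) / (2 * ((n : ℝ) - 1))) * ((∑ i, B i i) - B k k) ^ 2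
        + (∑ i, ∑ j ∈ univ.filter (fun j => i < j), B i j * B j i)
        + (1 / (2 * ((n : ℝ) - 1))) *
            (∑ i ∈ univ.filter (fun i => i ≠ k),
              ∑ j ∈ univ.filter (fun j => i < j ∧ j ≠ k), (B i i - B j j) ^ 2) := by
  have hpairs (i : Fin n) :
      univ.filter (fun j => i < j ∧ j ≠ k) = (univ.erase k).filter (fun j => i < j) := by
    ext j; simp [and_comm]
  have hsq := sq_sum_eq_two_mul_sum_sum_lt_add_sum_sq univ (fun i => B i i)
  have hlag := sum_sum_lt_sq_sub_eq (univ.erase k) (fun i => B i i)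
  rw [card_erase_of_mem (mem_univ k), card_univ, Fintype.card_fin, Nat.cast_pred (by omega),
    sum_erase_eq_sub (f := fun i => B i i) (mem_univ k),
    sum_erase_eq_sub (f := fun i => B i i ^ 2) (mem_univ k)] at hlag
  have hn1 : (n : ℝ) - 1 ≠ 0 := by
    have : (2 : ℝ) ≤ n := by exact_mod_cast hn
    linarith
  simp only [filter_ne', hpairs, hlag, sum_sub_distrib]
  field_simp
  linear_combination ((n : ℝ) - 1) * hsq
end

section
/- Let B = (b_{ij}) be an n×n real matrix with n ≥ 2 such that b_{ij} b_{ji} ≥ 0 for all i < j. Then for each k, σ₁(B)·σ₁(B|k) ≥ σ₂(B) + (n/(2(n−1)))·(σ₁(B|k))², with equality if and only if all diagonal entries b_{ii} with i ≠ k are equal and b_{ij} b_{ji} = 0 for all i ≠ j. -/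
/-!
Since `σ₂ = (σ₁² - ∑ bᵢᵢ²) / 2 - ∑_{i<j} bᵢⱼbⱼᵢ`, the gap `σ₁ σ₁(B|k) - σ₂ - n/(2(n-1)) σ₁(B|k)²`
equals `(∑_{i,j ≠ k} (bᵢᵢ - bⱼⱼ)²) / (4(n-1)) + ∑_{i<j} bᵢⱼbⱼᵢ`, by Lagrange's identity for the
`n - 1` diagonal entries off `k`. Both terms are nonnegative, and they vanish exactly in the stated
equality case.
-/

open Finset

namespace Finset

variable {ι R : Type*}

theorem sum_sum_sub_sq [CommRing R] (s : Finset ι) (x : ι → R) :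
    ∑ i ∈ s, ∑ j ∈ s, (x i - x j) ^ 2 = 2 * #s * ∑ i ∈ s, x i ^ 2 - 2 * (∑ i ∈ s, x i) ^ 2 := by
  simp only [sub_sq, sum_add_distrib, sum_sub_distrib, sum_const, nsmul_eq_mul, mul_assoc,
    ← mul_sum]
  rw [← sum_mul, sq (∑ i ∈ s, x i), sum_mul_sum]
  ring

theorem sum_sum_sub_sq_eq_zero_iff [Ring R] [LinearOrder R] [IsStrictOrderedRing R]
    (s : Finset ι) (x : ι → R) :
    ∑ i ∈ s, ∑ j ∈ s, (x i - x j) ^ 2 = 0 ↔ ∀ i ∈ s, ∀ j ∈ s, x i = x j := by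
  simp only [sum_eq_zero_iff_of_nonneg fun _ _ => sum_nonneg fun _ _ => sq_nonneg _,
    sum_eq_zero_iff_of_nonneg fun _ _ => sq_nonneg _, sq_eq_zero_iff, sub_eq_zero]

variable [Fintype ι] [LinearOrder ι]

theorem sum_univ_eq_sum_gt_add_sum_lt_add [AddCommMonoid R] (i : ι) (f : ι → R) :
    ∑ j, f j = ∑ j ∈ univ.filter (i < ·), f j + ∑ j ∈ univ.filter (· < i), f j + f i := by
  have herase : univ.erase i = univ.filter (i < ·) ∪ univ.filter (· < i) := by
    ext j; simp [ne_comm]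
  rw [← add_sum_erase univ f (mem_univ i), herase,
    sum_union (disjoint_filter.2 fun j _ h h' => (h.trans h').false), add_comm]

theorem sq_sum_eq_two_mul_sum_lt_add_sum_sq [CommSemiring R] (x : ι → R) :
    (∑ i, x i) ^ 2 = 2 * ∑ i, ∑ j ∈ univ.filter (i < ·), x i * x j + ∑ i, x i ^ 2 := by
  have hswap : ∑ i, ∑ j ∈ univ.filter (· < i), x i * x j
      = ∑ i, ∑ j ∈ univ.filter (i < ·), x i * x j := by
    rw [sum_comm' (t' := univ) (s' := fun j => univ.filter (j < ·)) (by simp)]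
    simp_rw [mul_comm]
  rw [sq, sum_mul_sum, sum_congr rfl fun i _ => sum_univ_eq_sum_gt_add_sum_lt_add i (x i * x ·),
    sum_add_distrib, sum_add_distrib, hswap]
  simp only [← sq]
  ring

theorem sum_sum_lt_nonneg [AddCommMonoid R] [PartialOrder R] [IsOrderedAddMonoid R]
    {g : ι → ι → R} (hg : ∀ i j, i < j → 0 ≤ g i j) :
    0 ≤ ∑ i, ∑ j ∈ univ.filter (i < ·), g i j :=
  sum_nonneg fun i _ => sum_nonneg fun j hj => hg i j (mem_filter.1 hj).2

theorem sum_sum_lt_eq_zero_iff_of_nonneg [AddCommMonoid R] [PartialOrder R]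
    [IsOrderedAddMonoid R] {g : ι → ι → R} (hg : ∀ i j, i < j → 0 ≤ g i j) :
    ∑ i, ∑ j ∈ univ.filter (i < ·), g i j = 0 ↔ ∀ i j, i < j → g i j = 0 := by
  simp only [sum_eq_zero_iff_of_nonneg fun i _ => sum_nonneg fun j hj =>
      hg i j (mem_filter.1 hj).2,
    sum_eq_zero_iff_of_nonneg fun j hj => hg _ j (mem_filter.1 hj).2, mem_univ, mem_filter,
    true_and, forall_const]

end Finset

namespace Matrix

variable {ι R : Type*} [Fintype ι] [LinearOrder ι]

def sigma2 [CommRing R] (A : Matrix ι ι R) : R :=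
  ∑ i, ∑ j ∈ univ.filter (i < ·), (A i i * A j j - A i j * A j i)

variable [Field R] [LinearOrder R] [IsStrictOrderedRing R]

theorem trace_mul_sub_sigma2_sub_eq (A : Matrix ι ι R) (k : ι) (hι : 1 < Fintype.card ι) :
    A.trace * (A.trace - A k k) - A.sigma2
        - Fintype.card ι / (2 * (Fintype.card ι - 1)) * (A.trace - A k k) ^ 2
      = (∑ i ∈ univ.erase k, ∑ j ∈ univ.erase k, (A i i - A j j) ^ 2)
            / (4 * (Fintype.card ι - 1))
        + ∑ i, ∑ j ∈ univ.filter (i < ·), A i j * A j i := by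
  have hm : (Fintype.card ι : R) - 1 ≠ 0 := by
    rw [sub_ne_zero]; exact_mod_cast hι.ne'
  have hcard : (#(univ.erase k) : R) = Fintype.card ι - 1 := by
    rw [card_erase_of_mem (mem_univ k), card_univ, Nat.cast_sub hι.le, Nat.cast_one]
  have hsigma2 : A.sigma2 = (A.trace ^ 2 - ∑ i, A i i ^ 2) / 2
      - ∑ i, ∑ j ∈ univ.filter (i < ·), A i j * A j i := by
    rw [trace, sq_sum_eq_two_mul_sum_lt_add_sum_sq, sigma2]
    simp only [sum_sub_distrib, diag_apply]
    ring
  rw [sum_sum_sub_sq, hcard, hsigma2, sum_erase_eq_sub (mem_univ k),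
    sum_erase_eq_sub (mem_univ k), trace]
  simp only [diag_apply]
  field_simp
  ring

end Matrix

theorem sigma_inequality (n : ℕ) (hn : 2 ≤ n) (B : Matrix (Fin n) (Fin n) ℝ)
    (hB : ∀ i j : Fin n, i < j → 0 ≤ B i j * B j i) (k : Fin n) :
    (∑ i, ∑ j ∈ univ.filter (fun j => i < j), (B i i * B j j - B i j * B j i))
        + ((n : ℝ) / (2 * ((n : ℝ) - 1))) * ((∑ i, B i i) - B k k) ^ 2
      ≤ (∑ i, B i i) * ((∑ i, B i i) - B k k)
    ∧ ((∑ i, B i i) * ((∑ i, B i i) - B k k)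
        = (∑ i, ∑ j ∈ univ.filter (fun j => i < j), (B i i * B j j - B i j * B j i))
          + ((n : ℝ) / (2 * ((n : ℝ) - 1))) * ((∑ i, B i i) - B k k) ^ 2
      ↔ (∀ i j : Fin n, i ≠ k → j ≠ k → B i i = B j j)
        ∧ (∀ i j : Fin n, i ≠ j → B i j * B j i = 0)) := by
  have key := B.trace_mul_sub_sigma2_sub_eq k (by rwa [Fintype.card_fin])
  simp only [Fintype.card_fin, Matrix.trace, Matrix.diag_apply, Matrix.sigma2] at key
  have hm : (0 : ℝ) < 4 * (n - 1) := by
    have : (2 : ℝ) ≤ n := by exact_mod_cast hn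
    linarith
  have hspread :
      0 ≤ (∑ i ∈ univ.erase k, ∑ j ∈ univ.erase k, (B i i - B j j) ^ 2) / (4 * (n - 1)) :=
    div_nonneg (sum_nonneg fun _ _ => sum_nonneg fun _ _ => sq_nonneg _) hm.le
  have hP := sum_sum_lt_nonneg hB
  refine ⟨by linarith, ?_⟩
  have : Std.Symm fun i j => B i j * B j i = 0 := ⟨fun i j h => by rwa [mul_comm]⟩
  rw [← sub_eq_zero, ← sub_sub, key, add_eq_zero_iff_of_nonneg hspread hP, div_eq_zero_iff,
    or_iff_left hm.ne', sum_sum_sub_sq_eq_zero_iff, sum_sum_lt_eq_zero_iff_of_nonneg hB]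
  exact and_congr (by simp [imp_forall_iff]) pairwise_iff_lt.symm
end

section
/- Let A be a real symmetric n×n matrix (n ≥ 2) with σ₁(A) ≥ 0 and σ₂(A) ≥ 0, where σ₁ is the trace and σ₂ = ∑_{i<j}(a_{ii}a_{jj} − a_{ij}a_{ji}). Then the matrix σ₁(A)·I − A is positive semidefinite. -/
/-!
The quadratic form of `A` is bounded by Cauchy–Schwarz over pairs of indices:
`(xᵀ A x)² ≤ (∑ᵢⱼ Aᵢⱼ²) |x|⁴`. For symmetric `A`, `∑ᵢⱼ Aᵢⱼ² = tr(A²) = σ₁(A)² − 2σ₂(A) ≤ σ₁(A)²`,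
so `xᵀ A x ≤ σ₁(A) |x|²` once `σ₁(A) ≥ 0`.
-/

open Finset

variable {ι : Type*} [Fintype ι]

lemma Finset.sum_sum_eq_sum_diag_add_two_nsmul_sum_sum_lt [LinearOrder ι] {M : Type*}
    [AddCommMonoid M] (f : ι → ι → M) (hf : ∀ i j, f i j = f j i) :
    ∑ i, ∑ j, f i j = ∑ i, f i i + 2 • ∑ i, ∑ j with i < j, f i j := by
  have hsplit (i : ι) :
      ∑ j, f i j = ∑ j with j < i, f i j + f i i + ∑ j with i < j, f i j := by
    rw [← sum_filter_add_sum_filter_not univ (i < ·), add_comm]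
    congr 1
    have : univ.filter (¬ i < ·) = insert i (univ.filter (· < i)) := by
      ext j; simp [le_iff_lt_or_eq, or_comm]
    rw [this, sum_insert (by simp), add_comm]
  have hswap : ∑ i, ∑ j with j < i, f i j = ∑ i, ∑ j with i < j, f i j := by
    rw [sum_comm' (t' := univ) (s' := fun j => univ.filter (j < ·)) (by simp)]
    exact sum_congr rfl fun i _ => sum_congr rfl fun j _ => hf j i
  simp only [hsplit, sum_add_distrib, hswap]
  abel

namespace Matrix

lemma two_mul_sum_principal_minors [LinearOrder ι] {R : Type*} [CommRing R]
    (A : Matrix ι ι R) :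
    2 * ∑ i, ∑ j with i < j, (A i i * A j j - A i j * A j i) = A.trace ^ 2 - (A * A).trace := by
  have h := sum_sum_eq_sum_diag_add_two_nsmul_sum_sum_lt
    (fun i j => A i i * A j j - A i j * A j i) fun i j => by ring
  simp only [sub_self, sum_const_zero, zero_add, two_nsmul, ← two_mul] at h
  rw [← h]
  simp [trace, mul_apply, sq, sum_mul_sum, sum_sub_distrib]

lemma IsSymm.trace_mul_self {R : Type*} [CommRing R] {A : Matrix ι ι R} (hA : A.IsSymm) :
    (A * A).trace = ∑ i, ∑ j, A i j ^ 2 := by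
  simp only [trace, diag, mul_apply, sq]
  exact sum_congr rfl fun i _ => sum_congr rfl fun j _ => by rw [hA.apply i j]

lemma dotProduct_mulVec_sq_le {R : Type*} [CommRing R] [LinearOrder R] [IsStrictOrderedRing R]
    (A : Matrix ι ι R) (x : ι → R) :
    (x ⬝ᵥ A *ᵥ x) ^ 2 ≤ (∑ i, ∑ j, A i j ^ 2) * (x ⬝ᵥ x) ^ 2 := by
  have hq : x ⬝ᵥ A *ᵥ x = ∑ p ∈ univ ×ˢ univ, A p.1 p.2 * (x p.1 * x p.2) := by
    simp only [dotProduct, mulVec, mul_sum, sum_product]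
    exact sum_congr rfl fun i _ => sum_congr rfl fun j _ => by ring
  have hx : (x ⬝ᵥ x) ^ 2 = ∑ p ∈ univ ×ˢ univ, (x p.1 * x p.2) ^ 2 := by
    simp only [dotProduct, sq, sum_mul_sum, sum_product]
    exact sum_congr rfl fun i _ => sum_congr rfl fun j _ => by ring
  rw [hq, hx, ← sum_product' (f := fun i j => A i j ^ 2)]
  exact sum_mul_sq_le_sq_mul_sq _ _ _

lemma posSemidef_trace_smul_one_sub [DecidableEq ι] {A : Matrix ι ι ℝ} (hA : A.IsSymm)
    (h1 : 0 ≤ A.trace) (h2 : (A * A).trace ≤ A.trace ^ 2) :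
    (A.trace • (1 : Matrix ι ι ℝ) - A).PosSemidef := by
  set s := A.trace
  have hherm : (s • (1 : Matrix ι ι ℝ) - A).IsHermitian := by
    rw [isHermitian_iff_isSymm]
    exact (isSymm_one.smul s).sub hA
  refine PosSemidef.of_dotProduct_mulVec_nonneg hherm fun x => ?_
  have hquad : x ⬝ᵥ A *ᵥ x ≤ s * (x ⬝ᵥ x) := by
    refine le_of_sq_le_sq ?_ (mul_nonneg h1 (dotProduct_self_star_nonneg x))
    calc (x ⬝ᵥ A *ᵥ x) ^ 2 ≤ (A * A).trace * (x ⬝ᵥ x) ^ 2 := by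
          rw [hA.trace_mul_self]; exact dotProduct_mulVec_sq_le A x
      _ ≤ (s * (x ⬝ᵥ x)) ^ 2 := by rw [mul_pow]; gcongr
  simpa [sub_mulVec, smul_mulVec, dotProduct_sub] using hquad

end Matrix

theorem ellipticity_core_general (n : ℕ) (A : Matrix (Fin n) (Fin n) ℝ)
    (hA : A.IsSymm) (h1 : 0 ≤ Matrix.trace A)
    (h2 : 0 ≤ ∑ i, ∑ j ∈ univ.filter (fun j => i < j), (A i i * A j j - A i j * A j i)) :
    (Matrix.trace A • (1 : Matrix (Fin n) (Fin n) ℝ) - A).PosSemidef := by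
  refine Matrix.posSemidef_trace_smul_one_sub hA h1 ?_
  have := A.two_mul_sum_principal_minors
  linarith

theorem ellipticity_core (n : ℕ) (hn : 2 ≤ n) (A : Matrix (Fin n) (Fin n) ℝ)
    (hA : A.IsSymm) (h1 : 0 ≤ Matrix.trace A)
    (h2 : 0 ≤ ∑ i, ∑ j ∈ univ.filter (fun j => i < j), (A i i * A j j - A i j * A j i)) :
    (Matrix.trace A • (1 : Matrix (Fin n) (Fin n) ℝ) - A).PosSemidef :=
  ellipticity_core_general n A hA h1 h2
end

section
/- Let λ₁,...,λₙ be real numbers with n ≥ 2 such that ∑_i λ_i ≥ 0 and ∑_{i<j} λ_i λ_j ≥ 0. Then for every k, ∑_{i≠k} λ_i ≥ 0. Moreover, (∑_i λ_i)(∑_{i≠k} λ_i) ≥ ∑_{i<j} λ_i λ_j + (n/(2(n−1)))·(∑_{i≠k} λ_i)². -/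
open Finset

theorem lambda_sums (n : ℕ) (hn : 2 ≤ n) (l : Fin n → ℝ)
    (h1 : 0 ≤ ∑ i, l i)
    (h2 : 0 ≤ ∑ i, ∑ j ∈ univ.filter (fun j => i < j), l i * l j) :
    ∀ k : Fin n,
      0 ≤ ∑ i ∈ univ.erase k, l i ∧
      (∑ i, ∑ j ∈ univ.filter (fun j => i < j), l i * l j)
          + ((n : ℝ) / (2 * ((n : ℝ) - 1))) * (∑ i ∈ univ.erase k, l i) ^ 2
        ≤ (∑ i, l i) * (∑ i ∈ univ.erase k, l i) := by
  intro k
  set H := ∑ i, l i with hH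
  set S := ∑ i, ∑ j ∈ univ.filter (fun j => i < j), l i * l j with hS
  set μ := ∑ i ∈ univ.erase k, l i with hμ
  set Q := ∑ i, (l i) ^ 2 with hQ
  have hfilter : ∀ i : Fin n, univ.filter (fun j => i < j) = Ioi i := by
    intro i; ext j; simp
  have hcompl : ∀ i : Fin n, ({i}ᶜ : Finset (Fin n)) = univ.erase i := by
    intro i; ext j; simp [eq_comm]
  have key : H ^ 2 = Q + 2 * S := by
    have h0 := Finset.sum_sum_Ioi_add_eq_sum_sum_off_diag (f := fun i j : Fin n => l i * l j)
    simp only [Finset.compl_singleton] at h0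
    have hL : ∑ i, ∑ j ∈ Ioi i, (l j * l i + l i * l j) = 2 * S := by
      rw [hS]
      simp_rw [hfilter]
      rw [Finset.mul_sum]
      refine Finset.sum_congr rfl fun i _ => ?_
      rw [Finset.mul_sum]
      exact Finset.sum_congr rfl fun j _ => by ring
    rw [hL] at h0
    rw [h0]
    simp_rw [Finset.sum_erase_eq_sub (Finset.mem_univ _)]
    rw [Finset.sum_sub_distrib]
    simp_rw [← Finset.sum_mul]
    rw [← Finset.mul_sum, ← hH]
    simp_rw [← sq]
    rw [← hQ]
    ring
  have hμeq : μ = H - l k := by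
    rw [hμ, hH, ← Finset.add_sum_erase univ l (Finset.mem_univ k)]; ring
  have hQk : ∑ i ∈ univ.erase k, (l i) ^ 2 = Q - l k ^ 2 := by
    rw [hQ, ← Finset.add_sum_erase univ (fun i => (l i) ^ 2) (Finset.mem_univ k)]; ring
  have hcardn : (univ.erase k).card = n - 1 := by
    rw [Finset.card_erase_of_mem (Finset.mem_univ k), Finset.card_univ, Fintype.card_fin]
  have hcard : (((univ.erase k).card : ℕ) : ℝ) = (n : ℝ) - 1 := by
    rw [hcardn, Nat.cast_sub (by omega)]; simp
  have hcs : μ ^ 2 ≤ ((n : ℝ) - 1) * (Q - l k ^ 2) := by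
    have h5 := sq_sum_le_card_mul_sum_sq (s := univ.erase k) (f := l)
    rw [← hμ, hQk] at h5
    calc μ ^ 2 ≤ (((univ.erase k).card : ℕ) : ℝ) * (Q - l k ^ 2) := h5
    _ = ((n : ℝ) - 1) * (Q - l k ^ 2) := by rw [hcard]
  have hm : (1 : ℝ) ≤ (n : ℝ) - 1 := by
    have : (2 : ℝ) ≤ (n : ℝ) := by exact_mod_cast hn
    linarith
  have h2m : (0 : ℝ) < 2 * ((n : ℝ) - 1) := by linarith
  have hid : 2 * (H * μ - S) = μ ^ 2 + (Q - l k ^ 2) := by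
    rw [hμeq]; nlinarith [key]
  have hQk2 : Q - l k ^ 2 = 2 * (H * μ - S) - μ ^ 2 := by linarith
  have hcs' : μ ^ 2 ≤ ((n : ℝ) - 1) * (2 * (H * μ - S) - μ ^ 2) := by
    rw [← hQk2]; exact hcs
  have claim2 : S + ((n : ℝ) / (2 * ((n : ℝ) - 1))) * μ ^ 2 ≤ H * μ := by
    have step : (n : ℝ) * μ ^ 2 ≤ (H * μ - S) * (2 * ((n : ℝ) - 1)) := by nlinarith [hcs']
    have hdiv : (n : ℝ) / (2 * ((n : ℝ) - 1)) * μ ^ 2 ≤ H * μ - S := by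
      rw [div_mul_eq_mul_div, div_le_iff₀ h2m]; exact step
    linarith
  refine ⟨?_, claim2⟩
  by_contra hneg
  push_neg at hneg
  have hHμ : H * μ ≤ 0 := mul_nonpos_of_nonneg_of_nonpos h1 (le_of_lt hneg)
  have hμ2 : (0 : ℝ) < μ ^ 2 := by nlinarith
  have hc : (0 : ℝ) < (n : ℝ) / (2 * ((n : ℝ) - 1)) := div_pos (by linarith) h2m
  nlinarith [mul_pos hc hμ2]
end

section
/- Let h: (r₀,∞) → ℝ be C² with h' never zero, and set y(r) = −1/(1+(h'(r))²). Then the scalar curvature of the rotationally symmetric graph of h satisfies R ≡ 0 if and only if y' + ((n−2)/r)·y + (n−2)/r = 0, i.e. if and only if y(r) = C₁ r^{2−n} − 1 for some constant C₁, equivalently (h'(r))² = C₁/(r^{n−2} − C₁). -/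
/-!
Differentiating `y = -1/(1 + h'²)` gives `y' = 2h'h''/(1 + h'²)²`, and with this the curvature
formula factors as `R = (n-1)/r · (y' + (n-2)/r · (y + 1))`; so `R ≡ 0` is a first-order linear
ODE for `y + 1`. With the integrating factor `r^(n-2)` it says that `r^(n-2) (y + 1)` has zero
derivative on the connected set `(r₀, ∞)`, hence is a constant `C₁`. Solving
`-1/(1 + h'²) = C₁ r^(2-n) - 1` for `h'²` is algebra, the degenerate case `r^(n-2) = C₁` being
excluded by `h' ≠ 0`.
-/

open Set

theorem HasDerivAt.neg_one_div_one_add_sq {f : ℝ → ℝ} {f' x : ℝ} (hf : HasDerivAt f f' x) :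
    HasDerivAt (fun t => -1 / (1 + f t ^ 2)) (2 * f x * f' / (1 + f x ^ 2) ^ 2) x := by
  have hpos : 0 < 1 + f x ^ 2 := by positivity
  refine ((hasDerivAt_const x (-1 : ℝ)).div ((hf.pow 2).const_add 1) hpos.ne').congr_deriv ?_
  simp only [Pi.pow_apply, Nat.cast_ofNat]
  ring

theorem ContDiffOn.hasDerivAt_deriv {𝕜 F : Type*} [NontriviallyNormedField 𝕜]
    [NormedAddCommGroup F] [NormedSpace 𝕜 F] {f : 𝕜 → F} {s : Set 𝕜} {x : 𝕜}
    (hf : ContDiffOn 𝕜 2 f s) (hs : IsOpen s) (hx : x ∈ s) :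
    HasDerivAt (deriv f) (deriv (deriv f) x) x :=
  ((hf.deriv_of_isOpen hs (m := 1) le_rfl).differentiableOn one_ne_zero x hx
    |>.differentiableAt (hs.mem_nhds hx)).hasDerivAt

theorem forall_deriv_add_div_mul_eq_zero_iff {u : ℝ → ℝ} {s : Set ℝ} (k : ℝ)
    (hs : IsOpen s) (hs' : IsPreconnected s) (hs₀ : s ⊆ Ioi 0) (hu : DifferentiableOn ℝ u s) :
    (∀ r ∈ s, deriv u r + k / r * u r = 0) ↔ ∃ C, ∀ r ∈ s, u r = C * r ^ (-k) := by
  have hpow : ∀ r ∈ s, ∀ a : ℝ, HasDerivAt (fun t : ℝ => t ^ a) (a * (r ^ a / r)) r := by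
    intro r hr a
    rw [← Real.rpow_sub_one (hs₀ hr).ne']
    exact Real.hasDerivAt_rpow_const (Or.inl (hs₀ hr).ne')
  constructor
  · intro hode
    have hderiv : ∀ r ∈ s, HasDerivAt (fun t => t ^ k * u t) 0 r := by
      intro r hr
      have hud := (hu r hr).differentiableAt (hs.mem_nhds hr)
      refine ((hpow r hr k).mul hud.hasDerivAt).congr_deriv ?_
      have hr0 : r ≠ 0 := (hs₀ hr).ne'
      rw [eq_neg_of_add_eq_zero_left (hode r hr)]
      field_simp
      ring
    obtain ⟨C, hC⟩ := hs.exists_is_const_of_deriv_eq_zero hs'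
      (fun r hr => (hderiv r hr).differentiableAt.differentiableWithinAt)
      (fun r hr => (hderiv r hr).deriv)
    refine ⟨C, fun r hr => ?_⟩
    have hrk : 0 < r ^ k := Real.rpow_pos_of_pos (hs₀ hr) k
    rw [← hC r hr, Real.rpow_neg (hs₀ hr).le]
    field_simp
  · rintro ⟨C, hC⟩ r hr
    have hloc : u =ᶠ[nhds r] fun t => C * t ^ (-k) := Filter.eventually_of_mem (hs.mem_nhds hr) hC
    rw [(((hpow r hr (-k)).const_mul C).congr_of_eventuallyEq hloc).deriv, hC r hr]
    field_simp
    ring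

theorem scalarCurvature_eq_div_mul_ode (m r p q : ℝ) (hr : r ≠ 0) :
    2 * ((m - 1) * q * p / (r * (1 + p ^ 2) ^ 2)
        + ((m - 1) * (m - 2) / 2) * p ^ 2 / (r ^ 2 * (1 + p ^ 2)))
      = (m - 1) / r
        * (2 * p * q / (1 + p ^ 2) ^ 2 + (m - 2) / r * (-1 / (1 + p ^ 2)) + (m - 2) / r) := by
  have hp : 1 + p ^ 2 ≠ 0 := by positivity
  field_simp
  ring

theorem neg_one_div_one_add_eq_div_sub_one_iff {s A C : ℝ} (hs : 0 < s) (hA : A ≠ 0) :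
    -1 / (1 + s) = C / A - 1 ↔ s = C / (A - C) := by
  have hs₁ : 1 + s ≠ 0 := by positivity
  constructor
  · intro h
    have hAC : A - C ≠ 0 := by
      rintro hAC
      rw [← sub_eq_zero.mp hAC, div_self hA, sub_self, div_eq_zero_iff] at h
      norm_num [hs₁] at h
    rw [eq_div_iff hAC]
    field_simp at h
    linarith
  · intro h
    have hAC : A - C ≠ 0 := by
      rintro hAC
      rw [hAC, div_zero] at h
      exact hs.ne' h
    rw [h, div_sub_one hA, one_add_div hAC, sub_add_cancel, div_div_eq_mul_div, neg_one_mul,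
      neg_sub]

theorem scalar_flat_ode (n : ℕ) (hn : 3 ≤ n) (r₀ : ℝ) (hr₀ : 0 ≤ r₀)
    (h : ℝ → ℝ) (hh : ContDiffOn ℝ 2 h (Ioi r₀))
    (h' : ∀ r ∈ Ioi r₀, deriv h r ≠ 0)
    (R y : ℝ → ℝ)
    (hR : ∀ r ∈ Ioi r₀, R r
      = 2 * (((n : ℝ) - 1) * deriv (deriv h) r * deriv h r / (r * (1 + (deriv h r) ^ 2) ^ 2)
          + (((n : ℝ) - 1) * ((n : ℝ) - 2) / 2) * (deriv h r) ^ 2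
              / (r ^ 2 * (1 + (deriv h r) ^ 2))))
    (hy : ∀ r ∈ Ioi r₀, y r = -1 / (1 + (deriv h r) ^ 2)) :
    ((∀ r ∈ Ioi r₀, R r = 0) ↔
        (∀ r ∈ Ioi r₀, deriv y r + (((n : ℝ) - 2) / r) * y r + ((n : ℝ) - 2) / r = 0))
    ∧ ((∀ r ∈ Ioi r₀, deriv y r + (((n : ℝ) - 2) / r) * y r + ((n : ℝ) - 2) / r = 0) ↔
        (∃ C₁ : ℝ, ∀ r ∈ Ioi r₀, y r = C₁ * r ^ ((2 : ℝ) - (n : ℝ)) - 1))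
    ∧ (∀ C₁ : ℝ, (∀ r ∈ Ioi r₀, y r = C₁ * r ^ ((2 : ℝ) - (n : ℝ)) - 1) ↔
        (∀ r ∈ Ioi r₀, (deriv h r) ^ 2 = C₁ / (r ^ ((n : ℝ) - 2) - C₁))) := by
  have hpos : Ioi r₀ ⊆ Ioi 0 := Ioi_subset_Ioi hr₀
  have hyDeriv : ∀ r ∈ Ioi r₀,
      HasDerivAt y (2 * deriv h r * deriv (deriv h) r / (1 + deriv h r ^ 2) ^ 2) r :=
    fun r hr => (hh.hasDerivAt_deriv isOpen_Ioi hr).neg_one_div_one_add_sq.congr_of_eventuallyEq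
      (Filter.eventually_of_mem (isOpen_Ioi.mem_nhds hr) hy)
  have hn1 : (n : ℝ) - 1 ≠ 0 := by
    have : (3 : ℝ) ≤ n := by exact_mod_cast hn
    linarith
  refine ⟨forall₂_congr fun r hr => ?_, ?_, fun C₁ => forall₂_congr fun r hr => ?_⟩
  · have hr0 : r ≠ 0 := (hpos hr).ne'
    rw [hR r hr, scalarCurvature_eq_div_mul_ode _ _ _ _ hr0, (hyDeriv r hr).deriv, hy r hr,
      mul_eq_zero, or_iff_right (div_ne_zero hn1 hr0)]
  · have hu : DifferentiableOn ℝ (fun r => y r + 1) (Ioi r₀) := fun r hr =>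
      ((hyDeriv r hr).differentiableAt.add_const 1).differentiableWithinAt
    simpa only [deriv_add_const, mul_add, mul_one, ← add_assoc, neg_sub, eq_sub_iff_add_eq]
      using forall_deriv_add_div_mul_eq_zero_iff ((n : ℝ) - 2) isOpen_Ioi isPreconnected_Ioi
        hpos hu
  · rw [hy r hr, show (2 : ℝ) - n = -((n : ℝ) - 2) by ring, Real.rpow_neg (hpos hr).le,
      ← div_eq_mul_inv]
    exact neg_one_div_one_add_eq_div_sub_one_iff (by positivity [h' r hr])
      (Real.rpow_pos_of_pos (hpos hr) _).ne'
end

section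
/- For n = 4, the function h(r) = C₀ + √(C₁)·ln(r + √(r² − C₁)) on (√C₁, ∞), with C₁ > 0, satisfies (h')² = C₁/(r² − C₁), and hence the rotationally symmetric graph of h over ℝ⁴ \ B_{√C₁} has identically zero scalar curvature. -/
/-! The scalar curvature of the graph is `R = (3 / r³) · (r² h'² / (1 + h'²))'`. For
`h'² = C₁ / (r² - C₁)` the bracket is the constant `C₁`, so the curvature vanishes; concretely,
the two terms of `R / 2` are `-3 C₁ / r⁴` and `3 C₁ / r⁴`. -/

open Set

namespace Real

variable {c r : ℝ}

lemma hasDerivAt_sqrt_sq_sub (h : c < r ^ 2) :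
    HasDerivAt (fun x => √(x ^ 2 - c)) (r / √(r ^ 2 - c)) r := by
  have hpos : 0 < r ^ 2 - c := sub_pos.mpr h
  convert ((hasDerivAt_pow 2 r).sub_const c).sqrt hpos.ne' using 1
  field_simp
  ring

lemma hasDerivAt_log_add_sqrt_sq_sub (hr : 0 < r) (h : c < r ^ 2) :
    HasDerivAt (fun x => log (x + √(x ^ 2 - c))) (√(r ^ 2 - c))⁻¹ r := by
  have hs : 0 < √(r ^ 2 - c) := sqrt_pos.mpr (sub_pos.mpr h)
  have hne : r + √(r ^ 2 - c) ≠ 0 := by positivity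
  refine (((hasDerivAt_id r).add (hasDerivAt_sqrt_sq_sub h)).log hne).congr_deriv ?_
  field_simp
  rw [add_comm √(r ^ 2 - c)]
  exact div_self hne

lemma hasDerivAt_inv_sqrt_sq_sub (h : c < r ^ 2) :
    HasDerivAt (fun x => (√(x ^ 2 - c))⁻¹) (-r / (√(r ^ 2 - c) * (r ^ 2 - c))) r := by
  have hpos : 0 < r ^ 2 - c := sub_pos.mpr h
  have hs : 0 < √(r ^ 2 - c) := sqrt_pos.mpr hpos
  refine ((hasDerivAt_sqrt_sq_sub h).inv hs.ne').congr_deriv ?_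
  field_simp
  rw [sq_sqrt hpos.le]

end Real

/-- `p` and `q` play the roles of `h'(r)` and `h''(r)`. -/
lemma graph_scalarCurvature_eq_zero {c r p q : ℝ} (hr : 0 < r) (h : c < r ^ 2)
    (hp : p ^ 2 = c / (r ^ 2 - c)) (hqp : q * p = -(c * r) / (r ^ 2 - c) ^ 2) :
    3 * q * p / (r * (1 + p ^ 2) ^ 2) + 3 * p ^ 2 / (r ^ 2 * (1 + p ^ 2)) = 0 := by
  have hpos : r ^ 2 - c ≠ 0 := (sub_pos.mpr h).ne'
  have hone : 1 + p ^ 2 = r ^ 2 / (r ^ 2 - c) := by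
    rw [hp]
    field_simp
    ring
  rw [mul_assoc, hqp, hone, hp]
  field_simp
  ring

theorem schwarzschild_graph_dim4 (C₀ C₁ : ℝ) (hC₁ : 0 < C₁)
    (h : ℝ → ℝ)
    (hdef : ∀ r ∈ Ioi (Real.sqrt C₁),
      h r = C₀ + Real.sqrt C₁ * Real.log (r + Real.sqrt (r ^ 2 - C₁))) :
    (∀ r ∈ Ioi (Real.sqrt C₁), (deriv h r) ^ 2 = C₁ / (r ^ 2 - C₁))
    ∧ (∀ r ∈ Ioi (Real.sqrt C₁),
        2 * (3 * deriv (deriv h) r * deriv h r / (r * (1 + (deriv h r) ^ 2) ^ 2)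
          + 3 * (deriv h r) ^ 2 / (r ^ 2 * (1 + (deriv h r) ^ 2))) = 0) := by
  have hr₀ : ∀ r ∈ Ioi √C₁, 0 < r := fun r hr => (Real.sqrt_nonneg C₁).trans_lt hr
  have hrC : ∀ r ∈ Ioi √C₁, 0 < r ^ 2 - C₁ := fun r hr => sub_pos.mpr (Real.lt_sq_of_sqrt_lt hr)
  have hd : ∀ r ∈ Ioi √C₁, deriv h r = √C₁ * (√(r ^ 2 - C₁))⁻¹ := fun r hr =>
    (((Real.hasDerivAt_log_add_sqrt_sq_sub (hr₀ r hr) (Real.lt_sq_of_sqrt_lt hr)).const_mul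
      √C₁).const_add C₀).congr_of_eventuallyEq
      (Filter.eventually_of_mem (isOpen_Ioi.mem_nhds hr) hdef) |>.deriv
  have hdd : ∀ r ∈ Ioi √C₁,
      deriv (deriv h) r = √C₁ * (-r / (√(r ^ 2 - C₁) * (r ^ 2 - C₁))) := fun r hr =>
    ((Real.hasDerivAt_inv_sqrt_sq_sub (Real.lt_sq_of_sqrt_lt hr)).const_mul
      √C₁).congr_of_eventuallyEq
      (Filter.eventually_of_mem (isOpen_Ioi.mem_nhds hr) hd) |>.deriv
  have hsq : ∀ r ∈ Ioi √C₁, deriv h r ^ 2 = C₁ / (r ^ 2 - C₁) := fun r hr => by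
    rw [hd r hr, mul_pow, inv_pow, Real.sq_sqrt hC₁.le, Real.sq_sqrt (hrC r hr).le, div_eq_mul_inv]
  refine ⟨hsq, fun r hr => ?_⟩
  have hqp : deriv (deriv h) r * deriv h r = -(C₁ * r) / (r ^ 2 - C₁) ^ 2 := by
    have hs : √(r ^ 2 - C₁) ≠ 0 := (Real.sqrt_pos.mpr (hrC r hr)).ne'
    have hne : r ^ 2 - C₁ ≠ 0 := (hrC r hr).ne'
    rw [hdd r hr, hd r hr]
    field_simp
    rw [Real.sq_sqrt hC₁.le, Real.sq_sqrt (hrC r hr).le]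
    ring
  rw [graph_scalarCurvature_eq_zero (hr₀ r hr) (Real.lt_sq_of_sqrt_lt hr) (hsq r hr) hqp, mul_zero]
end

section
/- For n ≥ 3 and m > 0, the principal curvatures of the graph of the Schwarzschild graphing function h (satisfying (h')² = 2m/(r^{n−2} − 2m)) at radius r are −((n−2)/2)·√(2m)·r^{−n/2} (multiplicity 1) and √(2m)·r^{−n/2} (multiplicity n−1). -/
/-! With ψ := h' / √(1 + h'²), the two principal curvatures are ψ' and ψ / r. The Schwarzschild
relation (h')² = 2m / (r^(n-2) - 2m) says precisely that ψ² = 2m / r^(n-2), i.e.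
ψ = √(2m) r^(-(n-2)/2), and both formulas follow by differentiating this power. -/

open Set Filter Topology

theorem hasDerivAt_div_sqrt_one_add_sq {w : ℝ → ℝ} {w' x : ℝ} (hw : HasDerivAt w w' x) :
    HasDerivAt (fun y => w y / √(1 + w y ^ 2)) (w' / (1 + w x ^ 2) ^ ((3 : ℝ) / 2)) x := by
  have hq : 0 < 1 + w x ^ 2 := by positivity
  have hsqrt : HasDerivAt (fun y => √(1 + w y ^ 2)) (2 * w x * w' / (2 * √(1 + w x ^ 2))) x := by
    simpa using ((hw.pow 2).const_add 1).sqrt hq.ne'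
  have h32 : (1 + w x ^ 2) ^ ((3 : ℝ) / 2) = (1 + w x ^ 2) * √(1 + w x ^ 2) := by
    rw [Real.sqrt_eq_rpow, ← Real.rpow_one_add' hq.le (by norm_num)]
    norm_num
  have hs : 0 < √(1 + w x ^ 2) := Real.sqrt_pos.mpr hq
  refine (hw.div hsqrt hs.ne').congr_deriv ?_
  rw [h32]
  field_simp
  rw [Real.sq_sqrt hq.le]
  ring

theorem div_sqrt_one_add_sq_eq_sqrt_div {w a b : ℝ} (hw : 0 ≤ w) (hab : a < b)
    (hsq : w ^ 2 = a / (b - a)) : w / √(1 + w ^ 2) = √(a / b) := by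
  have hba : 0 < b - a := sub_pos.mpr hab
  rw [← Real.sqrt_sq hw, ← Real.sqrt_div' _ (by positivity), Real.sq_sqrt (sq_nonneg w), hsq]
  congr 1
  field_simp
  ring

theorem sqrt_div_rpow {c r : ℝ} (p : ℝ) (hr : 0 < r) : √(c / r ^ p) = √c * r ^ (-p / 2) := by
  rw [Real.sqrt_div' _ (Real.rpow_nonneg hr.le p), Real.sqrt_eq_rpow, Real.sqrt_eq_rpow,
    ← Real.rpow_mul hr.le, neg_div, Real.rpow_neg hr.le, div_eq_mul_inv]
  ring_nf

theorem pos_and_lt_rpow_of_rpow_one_div_lt {a p r : ℝ} (ha : 0 < a) (hp : 0 < p)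
    (hr : a ^ (1 / p) < r) : 0 < r ∧ a < r ^ p := by
  have hr0 : 0 < r := (Real.rpow_pos_of_pos ha _).trans hr
  rw [one_div, Real.rpow_inv_lt_iff_of_pos ha.le hr0.le hp] at hr
  exact ⟨hr0, hr⟩

section Schwarzschild

variable {p m r : ℝ}

theorem div_sqrt_one_add_sq_eq_sqrt_mul_rpow {w : ℝ} (hp : 0 < p) (hm : 0 < m)
    (hr : (2 * m) ^ (1 / p) < r) (hw : 0 < w) (hsq : w ^ 2 = 2 * m / (r ^ p - 2 * m)) :
    w / √(1 + w ^ 2) = √(2 * m) * r ^ (-p / 2) := by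
  obtain ⟨hr0, hu⟩ := pos_and_lt_rpow_of_rpow_one_div_lt (by positivity) hp hr
  rw [div_sqrt_one_add_sq_eq_sqrt_div hw.le hu hsq, sqrt_div_rpow p hr0]

theorem differentiableAt_of_pos_of_sq_eq {w : ℝ → ℝ} (hp : 0 < p) (hm : 0 < m)
    (hpos : ∀ x ∈ Ioi ((2 * m) ^ (1 / p)), 0 < w x)
    (hsq : ∀ x ∈ Ioi ((2 * m) ^ (1 / p)), w x ^ 2 = 2 * m / (x ^ p - 2 * m))
    (hr : r ∈ Ioi ((2 * m) ^ (1 / p))) : DifferentiableAt ℝ w r := by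
  obtain ⟨hr0, hu⟩ := pos_and_lt_rpow_of_rpow_one_div_lt (by positivity) hp hr
  have hu' : 0 < r ^ p - 2 * m := sub_pos.mpr hu
  have heq : (fun x => √(2 * m / (x ^ p - 2 * m))) =ᶠ[𝓝 r] w :=
    eventually_of_mem (isOpen_Ioi.mem_nhds hr) fun x hx => by
      simp only
      rw [← hsq x hx, Real.sqrt_sq (hpos x hx).le]
  refine DifferentiableAt.congr_of_eventuallyEq ?_ heq.symm
  exact ((differentiableAt_const _).div
    ((Real.differentiableAt_rpow_const_of_ne p hr0.ne').sub_const _) hu'.ne').sqrt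
    (div_pos (by positivity) hu').ne'

end Schwarzschild

theorem schwarzschild_principal_curvatures_general (n : ℕ) (hn : 3 ≤ n) (m : ℝ) (hm : 0 < m)
    (h : ℝ → ℝ)
    (hpos : ∀ r ∈ Ioi ((2 * m) ^ ((1 : ℝ) / ((n : ℝ) - 2))), 0 < deriv h r)
    (hsq : ∀ r ∈ Ioi ((2 * m) ^ ((1 : ℝ) / ((n : ℝ) - 2))),
      (deriv h r) ^ 2 = 2 * m / (r ^ ((n : ℝ) - 2) - 2 * m)) :
    ∀ r ∈ Ioi ((2 * m) ^ ((1 : ℝ) / ((n : ℝ) - 2))),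
      deriv (deriv h) r / (1 + (deriv h r) ^ 2) ^ ((3 : ℝ) / 2)
          = -(((n : ℝ) - 2) / 2) * Real.sqrt (2 * m) * r ^ (-(n : ℝ) / 2)
      ∧ deriv h r / (r * Real.sqrt (1 + (deriv h r) ^ 2))
          = Real.sqrt (2 * m) * r ^ (-(n : ℝ) / 2) := by
  have hp : (0 : ℝ) < n - 2 := by
    have : (3 : ℝ) ≤ n := by exact_mod_cast hn
    linarith
  have hexp : -((n : ℝ) - 2) / 2 - 1 = -(n : ℝ) / 2 := by ring
  intro r hr
  have hr0 := (pos_and_lt_rpow_of_rpow_one_div_lt (by positivity) hp hr).1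
  have hslope : ∀ x ∈ Ioi ((2 * m) ^ ((1 : ℝ) / ((n : ℝ) - 2))),
      deriv h x / √(1 + deriv h x ^ 2) = √(2 * m) * x ^ (-((n : ℝ) - 2) / 2) := fun x hx =>
    div_sqrt_one_add_sq_eq_sqrt_mul_rpow hp hm hx (hpos x hx) (hsq x hx)
  constructor
  · have hlhs := hasDerivAt_div_sqrt_one_add_sq
      (differentiableAt_of_pos_of_sq_eq hp hm hpos hsq hr).hasDerivAt
    have hrhs := ((Real.hasDerivAt_rpow_const (p := -((n : ℝ) - 2) / 2) (Or.inl hr0.ne')).const_mul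
      √(2 * m)).congr_of_eventuallyEq (eventually_of_mem (isOpen_Ioi.mem_nhds hr) hslope)
    rw [hlhs.unique hrhs, hexp]
    ring
  · rw [mul_comm r, ← div_div, hslope r hr, mul_div_assoc, ← Real.rpow_sub_one hr0.ne', hexp]

theorem schwarzschild_principal_curvatures (n : ℕ) (hn : 3 ≤ n) (m : ℝ) (hm : 0 < m)
    (h : ℝ → ℝ)
    (hh : ContDiffOn ℝ 2 h (Ioi ((2 * m) ^ ((1 : ℝ) / ((n : ℝ) - 2)))))
    (hpos : ∀ r ∈ Ioi ((2 * m) ^ ((1 : ℝ) / ((n : ℝ) - 2))), 0 < deriv h r)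
    (hsq : ∀ r ∈ Ioi ((2 * m) ^ ((1 : ℝ) / ((n : ℝ) - 2))),
      (deriv h r) ^ 2 = 2 * m / (r ^ ((n : ℝ) - 2) - 2 * m)) :
    ∀ r ∈ Ioi ((2 * m) ^ ((1 : ℝ) / ((n : ℝ) - 2))),
      deriv (deriv h) r / (1 + (deriv h r) ^ 2) ^ ((3 : ℝ) / 2)
          = -(((n : ℝ) - 2) / 2) * Real.sqrt (2 * m) * r ^ (-(n : ℝ) / 2)
      ∧ deriv h r / (r * Real.sqrt (1 + (deriv h r) ^ 2))
          = Real.sqrt (2 * m) * r ^ (-(n : ℝ) / 2) :=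
  schwarzschild_principal_curvatures_general n hn m hm h hpos hsq
end

section
/- Let p ∈ ℝⁿ and ξ an n×n real symmetric matrix, and define A(p,ξ) = G(p)·ξ/√(1+|p|²) where G(p) = I − p pᵀ/(1+|p|²), H = tr(A), and R = H² − tr(A²). If R ≥ 0 and H ≥ 0, then the matrix (H·I − A)·G(p) is positive semidefinite (as a bilinear form, i.e. its symmetric part is positive semidefinite). -/
/-!
Write `G = S²` with `S` symmetric (a square root of the positive semidefinite `G(p)`) and
`X = ξ / √(1 + |p|²)`, so that `A = G X`. Then `(H I - A) G = H G - G X G = S (H I - B) S` with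
`B = S X S` symmetric, and by cyclicity of the trace `tr B = tr A = H`, `tr B² = tr A²`.
So `R ≥ 0` reads `∑ λᵢ² ≤ (∑ λᵢ)²` for the eigenvalues `λᵢ` of `B`, whence `λᵢ ≤ |λᵢ| ≤ H` when
`H ≥ 0`: `H I - B`, and hence its congruence `(H I - A) G`, is positive semidefinite. That matrix
is already symmetric, so it equals its symmetric part.
-/

open Matrix

noncomputable def gInv (n : ℕ) (p : Fin n → ℝ) : Matrix (Fin n) (Fin n) ℝ :=
  fun i j => (if i = j then (1 : ℝ) else 0) - p i * p j / (1 + ∑ l, (p l) ^ 2)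

noncomputable def shapeOp (n : ℕ) (p : Fin n → ℝ) (ξ : Matrix (Fin n) (Fin n) ℝ) :
    Matrix (Fin n) (Fin n) ℝ :=
  fun i j => (∑ k, gInv n p i k * ξ k j) / Real.sqrt (1 + ∑ l, (p l) ^ 2)

noncomputable def meanCurv (n : ℕ) (p : Fin n → ℝ) (ξ : Matrix (Fin n) (Fin n) ℝ) : ℝ :=
  ∑ i, shapeOp n p ξ i i

noncomputable def scalCurv (n : ℕ) (p : Fin n → ℝ) (ξ : Matrix (Fin n) (Fin n) ℝ) : ℝ :=
  (meanCurv n p ξ) ^ 2 - ∑ i, ∑ j, shapeOp n p ξ i j * shapeOp n p ξ j i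

namespace Matrix

variable {ι 𝕜 : Type*} [Fintype ι] [DecidableEq ι] [RCLike 𝕜]

open scoped MatrixOrder ComplexOrder in
theorem IsHermitian.posSemidef_smul_one_sub_iff {B : Matrix ι ι 𝕜} (hB : B.IsHermitian) (t : ℝ) :
    (t • (1 : Matrix ι ι 𝕜) - B).PosSemidef ↔ ∀ i, hB.eigenvalues i ≤ t := by
  rw [← nonneg_iff_posSemidef, sub_nonneg, ← Algebra.algebraMap_eq_smul_one,
    le_algebraMap_iff_spectrum_le hB.isSelfAdjoint, hB.spectrum_real_eq_range_eigenvalues,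
    Set.forall_mem_range]

theorem IsHermitian.trace_mul_self {B : Matrix ι ι 𝕜} (hB : B.IsHermitian) :
    (B * B).trace = ∑ i, (hB.eigenvalues i : 𝕜) ^ 2 := by
  conv_lhs => rw [hB.spectral_theorem, ← map_mul, Unitary.conjStarAlgAut_apply, trace_mul_cycle,
    Unitary.coe_star_mul_self, one_mul, diagonal_mul_diagonal, trace_diagonal]
  simp [sq]

theorem IsHermitian.posSemidef_trace_smul_one_sub {B : Matrix ι ι ℝ} (hB : B.IsHermitian)
    (htr : 0 ≤ B.trace) (hsq : (B * B).trace ≤ B.trace ^ 2) :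
    (B.trace • (1 : Matrix ι ι ℝ) - B).PosSemidef := by
  refine (hB.posSemidef_smul_one_sub_iff _).2 fun i => le_of_sq_le_sq ?_ htr
  calc hB.eigenvalues i ^ 2 ≤ ∑ j, hB.eigenvalues j ^ 2 :=
        Finset.single_le_sum (fun j _ => sq_nonneg _) (Finset.mem_univ i)
    _ = (B * B).trace := by simp [hB.trace_mul_self]
    _ ≤ B.trace ^ 2 := hsq

theorem posSemidef_one_sub_smul_vecMulVec {v : ι → ℝ} {c : ℝ} (hc : 0 ≤ c)
    (hcv : c * ∑ i, v i ^ 2 ≤ 1) : (1 - c • vecMulVec v v).PosSemidef := by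
  refine .of_dotProduct_mulVec_nonneg ?_ fun x => ?_
  · exact isHermitian_one.sub ((posSemidef_vecMulVec_self_star v).isHermitian.smul (.all c))
  · have hform : star x ⬝ᵥ ((1 - c • vecMulVec v v) *ᵥ x) = x ⬝ᵥ x - c * (v ⬝ᵥ x) ^ 2 := by
      simp [sub_mulVec, smul_mulVec, vecMulVec_mulVec, dotProduct_sub, dotProduct_comm x v, sq]
    have hcs := Finset.sum_mul_sq_le_sq_mul_sq Finset.univ v x
    rw [hform, sub_nonneg]
    calc c * (v ⬝ᵥ x) ^ 2 ≤ c * ((∑ i, v i ^ 2) * ∑ i, x i ^ 2) := mul_le_mul_of_nonneg_left hcs hc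
      _ = (c * ∑ i, v i ^ 2) * ∑ i, x i ^ 2 := by ring
      _ ≤ 1 * ∑ i, x i ^ 2 := by gcongr
      _ = x ⬝ᵥ x := by simp [dotProduct, sq]

open scoped MatrixOrder in
theorem PosSemidef.trace_mul_smul_sub_mul_mul {G X : Matrix ι ι ℝ} (hG : G.PosSemidef)
    (hX : X.IsHermitian) (htr : 0 ≤ (G * X).trace)
    (hsq : (G * X * (G * X)).trace ≤ (G * X).trace ^ 2) :
    ((G * X).trace • G - G * X * G).PosSemidef := by
  obtain ⟨S, hS, rfl⟩ : ∃ S : Matrix ι ι ℝ, S.IsHermitian ∧ S * S = G :=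
    ⟨CFC.sqrt G, (CFC.sqrt_nonneg G).posSemidef.isHermitian, CFC.sqrt_mul_sqrt_self G hG.nonneg⟩
  have hB : (S * X * S).IsHermitian := by
    simpa only [hS.eq] using isHermitian_mul_mul_conjTranspose S hX
  have htrB : (S * X * S).trace = (S * S * X).trace := trace_mul_cycle S X S
  have hsqB : (S * X * S * (S * X * S)).trace = (S * S * X * (S * S * X)).trace := by
    simp only [← Matrix.mul_assoc]
    rw [trace_mul_comm _ S]
    simp only [← Matrix.mul_assoc]
  have hkey := (hB.posSemidef_trace_smul_one_sub (htrB ▸ htr)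
    (by rwa [htrB, hsqB])).mul_mul_conjTranspose_same S
  rw [hS.eq, htrB] at hkey
  convert hkey using 1
  simp only [Matrix.mul_sub, Matrix.sub_mul, mul_smul_comm, smul_mul_assoc, mul_one,
    Matrix.mul_assoc]

end Matrix

section

variable (n : ℕ) (p : Fin n → ℝ) (ξ : Matrix (Fin n) (Fin n) ℝ)

theorem gInv_eq : gInv n p = 1 - (1 + ∑ l, p l ^ 2)⁻¹ • vecMulVec p p := by
  ext i j
  simp [gInv, vecMulVec, one_apply, div_eq_inv_mul]

theorem posSemidef_gInv : (gInv n p).PosSemidef := by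
  have hq : 0 < 1 + ∑ l, p l ^ 2 := by positivity
  rw [gInv_eq]
  exact posSemidef_one_sub_smul_vecMulVec (by positivity) (by rw [inv_mul_le_iff₀ hq]; linarith)

theorem shapeOp_eq : shapeOp n p ξ = gInv n p * (√(1 + ∑ l, p l ^ 2))⁻¹ • ξ := by
  rw [mul_smul_comm]
  ext i j
  simp [shapeOp, mul_apply, div_eq_inv_mul]

theorem meanCurv_eq_trace : meanCurv n p ξ = (shapeOp n p ξ).trace := rfl

theorem scalCurv_eq :
    scalCurv n p ξ = meanCurv n p ξ ^ 2 - (shapeOp n p ξ * shapeOp n p ξ).trace := by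
  simp [scalCurv, trace, mul_apply]

end

theorem pointwise_ellipticity (n : ℕ) (p : Fin n → ℝ) (ξ : Matrix (Fin n) (Fin n) ℝ)
    (hξ : ξ.IsSymm) (hR : 0 ≤ scalCurv n p ξ) (hH : 0 ≤ meanCurv n p ξ) :
    (((1 : ℝ) / 2) •
      (((meanCurv n p ξ • (1 : Matrix (Fin n) (Fin n) ℝ) - shapeOp n p ξ) * gInv n p)
        + ((meanCurv n p ξ • (1 : Matrix (Fin n) (Fin n) ℝ) - shapeOp n p ξ) * gInv n p)ᵀ)).PosSemidef := by
  set G := gInv n p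
  set X := (√(1 + ∑ l, p l ^ 2))⁻¹ • ξ
  have hA : shapeOp n p ξ = G * X := shapeOp_eq n p ξ
  have hX : X.IsHermitian := by
    refine IsHermitian.smul ?_ (.all _)
    rwa [IsHermitian, conjTranspose_eq_transpose_of_trivial]
  have htr : (G * X).trace = meanCurv n p ξ := by rw [← hA, meanCurv_eq_trace]
  have hsq : (G * X * (G * X)).trace ≤ (G * X).trace ^ 2 := by
    rw [htr, ← hA]
    linarith [scalCurv_eq n p ξ]
  have hM : (meanCurv n p ξ • G - G * X * G).PosSemidef :=
    htr ▸ (posSemidef_gInv n p).trace_mul_smul_sub_mul_mul hX (htr ▸ hH) hsq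
  have hE : (meanCurv n p ξ • (1 : Matrix (Fin n) (Fin n) ℝ) - shapeOp n p ξ) * G
      = meanCurv n p ξ • G - G * X * G := by
    rw [hA, Matrix.sub_mul, smul_mul_assoc, Matrix.one_mul]
  have hsymm := (conjTranspose_eq_transpose_of_trivial _).symm.trans hM.isHermitian.eq
  rw [hE, hsymm]
  convert hM using 1
  module
end
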